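/- For a field K of characteristic zero and k ≥ 2, the sequence c with c_n = n! if k divides n and c_n = 0 otherwise is not a linear recurrent sequence over K. -/
import Mathlib


open Finset

def IsLinRec {K : Type*} [Field K] (a : ℕ → K) : Prop :=
  ∃ N : ℕ, 1 ≤ N ∧ ∃ h : ℕ → K, ∀ n, N ≤ n →
    a n = ∑ i ∈ Finset.range N, h i * a (n - 1 - i)

/-- Over a field of characteristic zero and `k ≥ 2`, the sequence equal to
`n!` when `k ∣ n` and `0` otherwise is not linear recurrent. -/
theorem factorial_multiples_not_linRec {K : Type*} [Field K] [CharZero K]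
    (k : ℕ) (hk : 2 ≤ k) :
    ¬ IsLinRec (fun n => if k ∣ n then ((n.factorial : K)) else 0) := by
  rintro ⟨N, hN1, h, hrec⟩
  set g : ℕ → K := fun i => if k ∣ (i + 1) then h i else 0 with hg
  -- Step 1: for m ≥ N, (km)! = ∑ g i * (km-1-i)!
  have step1 : ∀ m : ℕ, N ≤ m →
      ((k * m).factorial : K) =
        ∑ i ∈ Finset.range N, g i * ((k * m - 1 - i).factorial : K) := by
    intro m hm
    have hkmN : N ≤ k * m := le_trans hm (Nat.le_mul_of_pos_left m (by omega))
    have := hrec (k * m) hkmN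
    simp only at this
    rw [if_pos ⟨m, rfl⟩] at this
    rw [this]
    apply Finset.sum_congr rfl
    intro i hi
    have hi' : i < N := Finset.mem_range.mp hi
    have hle : i + 1 ≤ k * m := by omega
    have hdvd : k ∣ (k * m - 1 - i) ↔ k ∣ (i + 1) := by
      have h1 : k * m - 1 - i = k * m - (i + 1) := by omega
      rw [h1]
      constructor
      · intro hd
        have := Nat.dvd_sub (Dvd.intro m rfl) hd
        rwa [Nat.sub_sub_self hle] at this
      · intro hd
        exact Nat.dvd_sub (Dvd.intro m rfl) hd
    rw [hg]
    by_cases hc : k ∣ (i + 1)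
    · simp only [hc, if_true, hdvd.mpr hc, if_true]
    · simp only [hc, if_false, (not_iff_not.mpr hdvd).mpr hc, if_false, mul_zero, zero_mul]
  -- Step 2: divide out (km - kN)!
  have step2 : ∀ m : ℕ, N ≤ m →
      (((k * m).descFactorial (k * N) : ℕ) : K) =
        ∑ i ∈ Finset.range N, g i *
          (((k * m - 1 - i).descFactorial (k * N - 1 - i) : ℕ) : K) := by
    intro m hm
    have hkNm : k * N ≤ k * m := Nat.mul_le_mul_left k hm
    have hF : ((k * m - k * N).factorial : K) ≠ 0 := by
      exact_mod_cast Nat.factorial_pos _ |>.ne'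
    apply mul_right_cancel₀ hF
    have e1 : (((k * m).descFactorial (k * N) : ℕ) : K) * ((k * m - k * N).factorial : K)
        = ((k * m).factorial : K) := by
      rw [← Nat.cast_mul, mul_comm, Nat.factorial_mul_descFactorial hkNm]
    rw [e1, step1 m hm, Finset.sum_mul]
    apply Finset.sum_congr rfl
    intro i hi
    have hi' : i < N := Finset.mem_range.mp hi
    have h1 : 1 + i ≤ k * N := by nlinarith
    have h2 : k * N - 1 - i ≤ k * m - 1 - i := by omega
    have h3 : (k * m - 1 - i) - (k * N - 1 - i) = k * m - k * N := by omega
    have e2 : (k * m - 1 - i).factorial =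
        (k * m - k * N).factorial * (k * m - 1 - i).descFactorial (k * N - 1 - i) := by
      rw [← h3, Nat.factorial_mul_descFactorial h2]
    rw [e2]
    push_cast
    ring
  -- Step 3: the polynomial identity
  set P : Polynomial K :=
    (descPochhammer K (k * N)).comp (Polynomial.C (k : K) * Polynomial.X) -
      ∑ i ∈ Finset.range N, Polynomial.C (g i) *
        (descPochhammer K (k * N - 1 - i)).comp
          (Polynomial.C (k : K) * Polynomial.X - Polynomial.C (((1 + i : ℕ) : K))) with hP
  have hroot : ∀ m : ℕ, N ≤ m → P.eval ((m : K)) = 0 := by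
    intro m hm
    rw [hP]
    simp only [Polynomial.eval_sub, Polynomial.eval_comp, Polynomial.eval_finset_sum,
      Polynomial.eval_mul, Polynomial.eval_C, Polynomial.eval_X]
    have hx : (k : K) * (m : K) = ((k * m : ℕ) : K) := by push_cast; ring
    rw [hx, descPochhammer_eval_eq_descFactorial, step2 m hm]
    rw [sub_eq_zero]
    apply Finset.sum_congr rfl
    intro i hi
    have hi' : i < N := Finset.mem_range.mp hi
    have hle : 1 + i ≤ k * m := by nlinarith
    have hx2 : ((k * m : ℕ) : K) - ((1 + i : ℕ) : K) = ((k * m - (1 + i) : ℕ) : K) := by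
      rw [Nat.cast_sub hle]
    rw [hx2, descPochhammer_eval_eq_descFactorial]
    have : k * m - (1 + i) = k * m - 1 - i := by omega
    rw [this]
  -- Step 4: P = 0
  have hP0 : P = 0 := by
    apply Polynomial.eq_zero_of_infinite_isRoot
    apply Set.Infinite.mono (s := (fun m : ℕ => (m : K)) '' {m | N ≤ m})
    · rintro x ⟨m, hm, rfl⟩
      exact hroot m hm
    · apply Set.Infinite.image
      · intro a _ b _ hab
        exact Nat.cast_injective hab
      · exact Set.infinite_of_not_bddAbove (by
          intro ⟨b, hb⟩
          have := hb (Set.mem_setOf.mpr (le_max_left N (b + 1)))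
          omega)
  -- Step 5: the coefficient of degree k*N in P is nonzero
  have hk0 : (k : K) ≠ 0 := Nat.cast_ne_zero.mpr (by omega)
  have hq : (Polynomial.C (k : K) * Polynomial.X : Polynomial K).natDegree = 1 := by
    rw [Polynomial.natDegree_C_mul hk0, Polynomial.natDegree_X]
  have hlead : (Polynomial.C (k : K) * Polynomial.X : Polynomial K).leadingCoeff = (k : K) :=
    Polynomial.leadingCoeff_C_mul_X _
  have hmain : ((descPochhammer K (k * N)).comp
      (Polynomial.C (k : K) * Polynomial.X)).coeff (k * N) = (k : K) ^ (k * N) := by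
    have hdeg : ((descPochhammer K (k * N)).comp
        (Polynomial.C (k : K) * Polynomial.X)).natDegree = k * N := by
      rw [Polynomial.natDegree_comp, hq, descPochhammer_natDegree, mul_one]
    have hcn := Polynomial.coeff_natDegree
      (p := (descPochhammer K (k * N)).comp (Polynomial.C (k : K) * Polynomial.X))
    rw [hdeg] at hcn
    rw [hcn, Polynomial.leadingCoeff_comp (by rw [hq]; exact one_ne_zero),
      (monic_descPochhammer K (k * N)).leadingCoeff, one_mul, hlead, descPochhammer_natDegree]
  have hsmall : ∀ i ∈ Finset.range N,
      (Polynomial.C (g i) * (descPochhammer K (k * N - 1 - i)).comp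
        (Polynomial.C (k : K) * Polynomial.X - Polynomial.C (((1 + i : ℕ) : K)))).coeff
          (k * N) = 0 := by
    intro i hi
    have hi' : i < N := Finset.mem_range.mp hi
    apply Polynomial.coeff_eq_zero_of_natDegree_lt
    calc (Polynomial.C (g i) * (descPochhammer K (k * N - 1 - i)).comp
          (Polynomial.C (k : K) * Polynomial.X - Polynomial.C (((1 + i : ℕ) : K)))).natDegree
        ≤ ((descPochhammer K (k * N - 1 - i)).comp
          (Polynomial.C (k : K) * Polynomial.X - Polynomial.C (((1 + i : ℕ) : K)))).natDegree := by
          apply Polynomial.natDegree_C_mul_le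
      _ ≤ (k * N - 1 - i) * 1 := by
          rw [Polynomial.natDegree_comp, descPochhammer_natDegree]
          apply Nat.mul_le_mul_left
          rw [Polynomial.natDegree_sub_C, hq]
      _ < k * N := by
          have h2N : 2 * N ≤ k * N := Nat.mul_le_mul_right N hk
          omega
  have hcoeff : P.coeff (k * N) = (k : K) ^ (k * N) := by
    rw [hP, Polynomial.coeff_sub, Polynomial.finset_sum_coeff, hmain,
      Finset.sum_congr rfl hsmall]
    simp
  rw [hP0] at hcoeff
  simp only [Polynomial.coeff_zero] at hcoeff
  exact (pow_ne_zero _ hk0) hcoeff.symm
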